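/- Let F be a finitely generated free 2-parameter persistence module and K ≤ F a submodule. For α ∈ ℕ², let I_α = φ_{α+e₁}^{α+e₁+e₂}(K_{α+e₁}) ∩ φ_{α+e₂}^{α+e₁+e₂}(K_{α+e₂}) ⊆ F_{α+e₁+e₂}. Then φ_α^{α+e₁+e₂}(K_α) ⊆ I_α ⊆ φ_α^{α+e₁+e₂}(F_α). -/
import Mathlib


/-- The free 2-parameter persistence module on a finite (multi)set of generators,
indexed by `ι` with degrees `deg`: at grade `α` it is the direct sum of one copy of `F`
for each generator `i` with `deg i ≤ α` (product order on `ℕ × ℕ`). -/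
abbrev FreeMod (F : Type*) [Field F] (ι : Type*) (deg : ι → ℕ × ℕ) (α : ℕ × ℕ) : Type _ :=
  {i : ι // deg i ≤ α} → F

/-- Structure map of the free module: identity on each summand present at the source,
new summands get `0`. -/
def freeMap (F : Type*) [Field F] (ι : Type*) (deg : ι → ℕ × ℕ) (α β : ℕ × ℕ)
    (_h : α ≤ β) : FreeMod F ι deg α →ₗ[F] FreeMod F ι deg β where
  toFun f i := if h' : deg i.1 ≤ α then f ⟨i.1, h'⟩ else 0
  map_add' f g := by funext i; by_cases h' : deg i.1 ≤ α <;> simp [h']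
  map_smul' c f := by funext i; by_cases h' : deg i.1 ≤ α <;> simp [h']

lemma freeMap_comp (F : Type*) [Field F] (ι : Type*) (deg : ι → ℕ × ℕ) (α β γ : ℕ × ℕ)
    (h1 : α ≤ β) (h2 : β ≤ γ) (f : FreeMod F ι deg α) :
    freeMap F ι deg β γ h2 (freeMap F ι deg α β h1 f) = freeMap F ι deg α γ (h1.trans h2) f := by
  funext i
  by_cases ha : deg i.1 ≤ α
  · simp [freeMap, ha, ha.trans h1]
  · simp [freeMap, ha]

/-- For a submodule `K` of a finitely generated free 2-parameter
persistence module `F` and `α ∈ ℕ²`, with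
`I_α = φ_{α+e₁}^{α+e₁+e₂}(K_{α+e₁}) ∩ φ_{α+e₂}^{α+e₁+e₂}(K_{α+e₂}) ⊆ F_{α+e₁+e₂}`,
one has the sandwich `φ_α^{α+e₁+e₂}(K_α) ⊆ I_α ⊆ φ_α^{α+e₁+e₂}(F_α)`. -/
theorem intersection_sandwich (F : Type*) [Field F] (ι : Type*) [Fintype ι]
    (deg : ι → ℕ × ℕ)
    (K : ∀ α : ℕ × ℕ, Submodule F (FreeMod F ι deg α))
    (hK : ∀ (α β : ℕ × ℕ) (h : α ≤ β), (K α).map (freeMap F ι deg α β h) ≤ K β)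
    (α : ℕ × ℕ) :
    (K α).map (freeMap F ι deg α (α + (1, 1)) (by simp [Prod.le_def])) ≤
      (K (α + (1, 0))).map
          (freeMap F ι deg (α + (1, 0)) (α + (1, 1)) (by simp [Prod.le_def])) ⊓
        (K (α + (0, 1))).map
          (freeMap F ι deg (α + (0, 1)) (α + (1, 1)) (by simp [Prod.le_def])) ∧
    (K (α + (1, 0))).map
        (freeMap F ι deg (α + (1, 0)) (α + (1, 1)) (by simp [Prod.le_def])) ⊓
      (K (α + (0, 1))).map
        (freeMap F ι deg (α + (0, 1)) (α + (1, 1)) (by simp [Prod.le_def])) ≤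
    LinearMap.range (freeMap F ι deg α (α + (1, 1)) (by simp [Prod.le_def])) := by
  constructor
  · rintro x ⟨y, hy, rfl⟩
    constructor
    · exact ⟨freeMap F ι deg α (α + (1, 0)) (by simp [Prod.le_def]) y,
        hK _ _ _ ⟨y, hy, rfl⟩, freeMap_comp F ι deg α (α + (1, 0)) (α + (1, 1)) _ _ y⟩
    · exact ⟨freeMap F ι deg α (α + (0, 1)) (by simp [Prod.le_def]) y,
        hK _ _ _ ⟨y, hy, rfl⟩, freeMap_comp F ι deg α (α + (0, 1)) (α + (1, 1)) _ _ y⟩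
  · rintro x ⟨⟨y₁, _, h₁⟩, ⟨y₂, _, h₂⟩⟩
    refine ⟨fun j => x ⟨j.1, j.2.trans (by simp [Prod.le_def])⟩, ?_⟩
    funext i
    simp only [freeMap, LinearMap.coe_mk, AddHom.coe_mk]
    split_ifs with h
    · rfl
    · rw [Prod.le_def, not_and_or] at h
      rcases h with h | h
      · rw [← h₂]
        simp only [freeMap, LinearMap.coe_mk, AddHom.coe_mk]
        rw [dif_neg]
        intro hc
        exact h (by simpa using hc.1)
      · rw [← h₁]
        simp only [freeMap, LinearMap.coe_mk, AddHom.coe_mk]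
        rw [dif_neg]
        intro hc
        exact h (by simpa using hc.2)
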